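/- Let Q(r) = 4(4k−3)·m·r^{3/k} / (k·(2r^{3/k} + m·r²)²). (i) If 1 < k ≤ 6/5, then for every m > 0 and every r > 0 one has Q(r) ≤ 3/(4r²). (ii) If k > 1 and m > 0, R0 > 0 are such that 4m·r^{3/k + 2}/(2r^{3/k} + m·r²)² ≤ 3/16 for all r ≥ R0, then Q(r) ≤ 3/(4r²) for all r ≥ R0. -/
import Mathlib


/-- The radial Jacobi potential Q(r) = 4(4k−3)·m·r^{3/k}/(k(2r^{3/k} + mr²)²)
for the totally geodesic slice in the 3-dimensional general Schwarzschild space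
with conformal exponent k and mass m. -/
noncomputable def Qpot (k m r : ℝ) : ℝ :=
  4 * (4 * k - 3) * m * r ^ (3 / k)
    / (k * (2 * r ^ (3 / k) + m * r ^ 2) ^ 2)

/-- (i) if 1 < k ≤ 6/5 then Q(r) ≤ 3/(4r²) for all m > 0, r > 0;
(ii) if k > 1 and 4m·r^{3/k + 2}/(2r^{3/k} + mr²)² ≤ 3/16 for all r ≥ R0, then
Q(r) ≤ 3/(4r²) for all r ≥ R0. -/
theorem statement15 :
    (∀ k m r : ℝ, 1 < k → k ≤ 6 / 5 → 0 < m → 0 < r →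
      Qpot k m r ≤ 3 / (4 * r ^ 2)) ∧
    (∀ k m R0 : ℝ, 1 < k → 0 < m → 0 < R0 →
      (∀ r : ℝ, R0 ≤ r →
        4 * m * r ^ (3 / k + 2) / (2 * r ^ (3 / k) + m * r ^ 2) ^ 2 ≤ 3 / 16) →
      ∀ r : ℝ, R0 ≤ r → Qpot k m r ≤ 3 / (4 * r ^ 2)) := by
  constructor
  · intro k m r hk hk6 hm hr
    unfold Qpot
    set x := r ^ (3 / k) with hx
    have hxpos : 0 < x := Real.rpow_pos_of_pos hr _
    have hkpos : (0:ℝ) < k := by linarith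
    have hD : 0 < 2 * x + m * r ^ 2 := by positivity
    have hr2 : 0 < r ^ 2 := by positivity
    rw [div_le_div_iff₀ (by positivity) (by positivity)]
    nlinarith [sq_nonneg (2 * x - m * r ^ 2), mul_pos hxpos (mul_pos hm hr2),
      mul_pos (mul_pos hxpos hm) hr2, sq_nonneg (2 * x + m * r ^ 2),
      mul_nonneg (mul_nonneg hxpos.le hm.le) hr2.le]
  · intro k m R0 hk hm hR0 hbound r hr
    have hrpos : 0 < r := lt_of_lt_of_le hR0 hr
    have hb := hbound r hr
    unfold Qpot
    set x := r ^ (3 / k) with hx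
    have hxpos : 0 < x := Real.rpow_pos_of_pos hrpos _
    have hkpos : (0:ℝ) < k := by linarith
    have hD : 0 < 2 * x + m * r ^ 2 := by positivity
    have hr2 : 0 < r ^ 2 := by positivity
    have hsplit : r ^ (3 / k + 2) = x * r ^ 2 := by
      rw [Real.rpow_add hrpos, hx]
      norm_num [Real.rpow_two]
    rw [hsplit, div_le_iff₀ (by positivity)] at hb
    rw [div_le_div_iff₀ (by positivity) (by positivity)]
    nlinarith [sq_nonneg (2 * x + m * r ^ 2), mul_pos hxpos (mul_pos hm hr2)]
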